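/- Let n ≥ 2 and N be integers with n+1 ≤ N ≤ 2n, let s be a real number with (N−2n)/(n(N−2)) ≤ s ≤ 0, and let z_1, …, z_N be points on the unit sphere S^{n-1} ⊂ ℝ^n such that ⟨z_i, z_j⟩ ≤ s for all i ≠ j. Then Σ_{i=1}^N Σ_{j=1}^N ‖z_i − z_j‖ ≥ N·(2N(1−ns²) − 2n(1−s²) + (n−1)N·√(2(1−s))) / (n(1−s²)). -/

import Mathlib

open scoped RealInnerProductSpace
open Finset Module

/-!
For unit vectors with `⟪x, y⟫ = t` we have `‖x - y‖ = √(2 - 2t)`. The even quadratic `f` with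
`f(s) = √(2 - 2s)` and `f(±1) = 2` lies below `√(2 - 2t)` on `[-1, s]`, so
`Σᵢⱼ ‖zᵢ - zⱼ‖ ≥ Σᵢⱼ f(⟪zᵢ, zⱼ⟫) - 2N`, the `-2N` correcting the diagonal. The coefficient of `t²`
in `f` is nonnegative, and `Σᵢⱼ ⟪zᵢ, zⱼ⟫²` is the squared Frobenius norm of the frame operator
`Σᵢ zᵢ zᵢᵀ`, whose trace is `N`; by Cauchy–Schwarz it is at least `N² / n`.
-/

variable {E : Type*} [NormedAddCommGroup E] [InnerProductSpace ℝ E] {ι : Type*}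

theorem sum_sum_inner_sq_eq_sum_sum_sq [Fintype ι] {κ : Type*} [Fintype κ]
    (b : OrthonormalBasis κ ℝ E) (z : ι → E) :
    ∑ i, ∑ j, ⟪z i, z j⟫ ^ 2 = ∑ k, ∑ l, (∑ i, ⟪b k, z i⟫ * ⟪b l, z i⟫) ^ 2 := by
  have hpair : ∀ i j, ⟪z i, z j⟫ ^ 2
      = ∑ k, ∑ l, (⟪b k, z i⟫ * ⟪b l, z i⟫) * (⟪b k, z j⟫ * ⟪b l, z j⟫) := by
    intro i j
    rw [sq, ← b.sum_inner_mul_inner, sum_mul_sum]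
    simp_rw [real_inner_comm (z i)]
    exact sum_congr rfl fun k _ => sum_congr rfl fun l _ => by ring
  simp_rw [hpair, sq, sum_mul_sum]
  simp only [sum_comm (s := (univ : Finset ι)) (t := (univ : Finset κ))]

theorem sq_sum_norm_sq_div_finrank_le [Fintype ι] [FiniteDimensional ℝ E] (z : ι → E) :
    (∑ i, ‖z i‖ ^ 2) ^ 2 / finrank ℝ E ≤ ∑ i, ∑ j, ⟪z i, z j⟫ ^ 2 := by
  set b := stdOrthonormalBasis ℝ E
  set G : Fin (finrank ℝ E) → Fin (finrank ℝ E) → ℝ := fun k l => ∑ i, ⟪b k, z i⟫ * ⟪b l, z i⟫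
  have htrace : ∑ k, G k k = ∑ i, ‖z i‖ ^ 2 := by
    rw [sum_comm]
    refine sum_congr rfl fun i _ => ?_
    rw [← real_inner_self_eq_norm_sq, ← b.sum_inner_mul_inner]
    simp_rw [real_inner_comm (z i)]
  rw [sum_sum_inner_sq_eq_sum_sum_sq b, ← htrace]
  refine div_le_of_le_mul₀ (by positivity) (by positivity) ?_
  calc (∑ k, G k k) ^ 2 ≤ finrank ℝ E * ∑ k, G k k ^ 2 := by
        simpa using sq_sum_le_card_mul_sum_sq (s := univ) (f := fun k => G k k)
    _ ≤ finrank ℝ E * ∑ k, ∑ l, G k l ^ 2 := by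
        gcongr with k
        exact single_le_sum (f := fun l => G k l ^ 2) (fun _ _ => sq_nonneg _) (mem_univ k)
    _ = _ := mul_comm _ _

theorem norm_sub_eq_sqrt_of_norm_eq_one {x y : E} (hx : ‖x‖ = 1) (hy : ‖y‖ = 1) :
    ‖x - y‖ = √(2 - 2 * ⟪x, y⟫) := by
  have hsq : ‖x - y‖ ^ 2 = 2 - 2 * ⟪x, y⟫ := by rw [norm_sub_sq_real, hx, hy]; ring
  rw [← hsq, Real.sqrt_sq (norm_nonneg _)]

noncomputable def sphereDistMinorant (s t : ℝ) : ℝ :=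
  √(2 - 2 * s) + (2 - √(2 - 2 * s)) * ((t ^ 2 - s ^ 2) / (1 - s ^ 2))

theorem sphereDistMinorant_le_sqrt {s t : ℝ} (hs : -1 < s) (hs0 : s ≤ 0) (ht : -1 ≤ t)
    (hts : t ≤ s) : sphereDistMinorant s t ≤ √(2 - 2 * t) := by
  set q := √(2 - 2 * s)
  set u := (t ^ 2 - s ^ 2) / (1 - s ^ 2)
  have hq0 : 0 ≤ q := Real.sqrt_nonneg _
  have hq_sq : q ^ 2 = 2 - 2 * s := Real.sq_sqrt (by linarith)
  have hq2 : q ≤ 2 := (Real.sqrt_le_left zero_le_two).2 (by linarith)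
  have hden : 0 < 1 - s ^ 2 := by nlinarith
  have hu0 : 0 ≤ u := div_nonneg (by nlinarith) hden.le
  have hu1 : u ≤ 1 := (div_le_one hden).2 (by nlinarith)
  have hconvex : (q + (2 - q) * u) ^ 2 ≤ (1 - u) * q ^ 2 + u * 2 ^ 2 := by
    nlinarith [mul_nonneg (mul_nonneg hu0 (sub_nonneg.2 hu1)) (sq_nonneg (2 - q))]
  have hlin : u * (1 + s) ≤ s - t := by
    rw [div_mul_eq_mul_div, div_le_iff₀ hden]
    nlinarith [mul_nonneg (sub_nonneg.2 hts) (neg_le_iff_add_nonneg.1 ht)]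
  rw [sphereDistMinorant, Real.le_sqrt (add_nonneg hq0 (mul_nonneg (by linarith) hu0))
    (by linarith)]
  nlinarith

theorem sphereDistMinorant_one {s : ℝ} (hs : 1 - s ^ 2 ≠ 0) : sphereDistMinorant s 1 = 2 := by
  rw [sphereDistMinorant, one_pow, div_self hs]
  ring

theorem sphereDistMinorant_inner_sub_le_norm_sub [DecidableEq ι] {s : ℝ} (hs : -1 < s)
    (hs0 : s ≤ 0) {z : ι → E} (hz : ∀ i, ‖z i‖ = 1) (hsep : ∀ i j, i ≠ j → ⟪z i, z j⟫ ≤ s)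
    (i j : ι) :
    sphereDistMinorant s ⟪z i, z j⟫ - (if i = j then 2 else 0) ≤ ‖z i - z j‖ := by
  by_cases hij : i = j
  · subst hij
    rw [real_inner_self_eq_norm_sq, hz, one_pow, sphereDistMinorant_one (by nlinarith)]
    simp
  · have hlow : -1 ≤ ⟪z i, z j⟫ := by
      simpa [hz] using neg_le_of_abs_le (abs_real_inner_le_norm (z i) (z j))
    rw [if_neg hij, sub_zero, norm_sub_eq_sqrt_of_norm_eq_one (hz i) (hz j)]
    exact sphereDistMinorant_le_sqrt hs hs0 hlow (hsep i j hij)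

theorem sum_sum_sphereDistMinorant_sub [Fintype ι] [DecidableEq ι] (s : ℝ) (z : ι → E) :
    ∑ i, ∑ j, (sphereDistMinorant s ⟪z i, z j⟫ - if i = j then 2 else 0)
      = Fintype.card ι ^ 2 * √(2 - 2 * s) + (2 - √(2 - 2 * s)) / (1 - s ^ 2)
          * (∑ i, ∑ j, ⟪z i, z j⟫ ^ 2 - Fintype.card ι ^ 2 * s ^ 2) - 2 * Fintype.card ι := by
  simp only [sphereDistMinorant, sum_sub_distrib, sum_add_distrib, sum_ite_eq, mem_univ,
    if_true, sum_const, card_univ, nsmul_eq_mul, ← mul_sum, ← sum_div]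
  ring

theorem sum_sum_norm_sub_ge [Fintype ι] [FiniteDimensional ℝ E] {s : ℝ} (hs : -1 < s)
    (hs0 : s ≤ 0) {z : ι → E} (hz : ∀ i, ‖z i‖ = 1) (hsep : ∀ i j, i ≠ j → ⟪z i, z j⟫ ≤ s) :
    Fintype.card ι ^ 2 * √(2 - 2 * s) + (2 - √(2 - 2 * s)) / (1 - s ^ 2)
        * (Fintype.card ι ^ 2 / finrank ℝ E - Fintype.card ι ^ 2 * s ^ 2) - 2 * Fintype.card ι
      ≤ ∑ i, ∑ j, ‖z i - z j‖ := by
  classical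
  have hframe : (Fintype.card ι : ℝ) ^ 2 / finrank ℝ E ≤ ∑ i, ∑ j, ⟪z i, z j⟫ ^ 2 := by
    simpa [hz] using sq_sum_norm_sq_div_finrank_le z
  have hcoeff : 0 ≤ (2 - √(2 - 2 * s)) / (1 - s ^ 2) := by
    refine div_nonneg (sub_nonneg.2 ?_) (by nlinarith)
    exact (Real.sqrt_le_left zero_le_two).2 (by linarith)
  calc _ ≤ ∑ i, ∑ j, (sphereDistMinorant s ⟪z i, z j⟫ - if i = j then 2 else 0) := by
        rw [sum_sum_sphereDistMinorant_sub]
        gcongr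
    _ ≤ ∑ i, ∑ j, ‖z i - z j‖ := by
        gcongr with i _ j _
        exact sphereDistMinorant_inner_sub_le_norm_sub hs hs0 hz hsep i j

theorem sum_dist_ge_tau2 (n N : ℕ) (hn : 2 ≤ n) (hN1 : n + 1 ≤ N)
    (s : ℝ) (hs1 : ((N : ℝ) - 2 * n) / ((n : ℝ) * ((N : ℝ) - 2)) ≤ s) (hs2 : s ≤ 0)
    (z : Fin N → EuclideanSpace ℝ (Fin n)) (hz : ∀ i, ‖z i‖ = 1)
    (hsep : ∀ i j, i ≠ j → ⟪z i, z j⟫ ≤ s) :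
    (N : ℝ) * (2 * N * (1 - n * s ^ 2) - 2 * n * (1 - s ^ 2)
        + ((n : ℝ) - 1) * N * Real.sqrt (2 * (1 - s)))
      / ((n : ℝ) * (1 - s ^ 2)) ≤ ∑ i, ∑ j, ‖z i - z j‖ := by
  have hn' : (2 : ℝ) ≤ n := by exact_mod_cast hn
  have hN1' : (n : ℝ) + 1 ≤ N := by exact_mod_cast hN1
  -- `(N - 2n) + n(N - 2) = N(n + 1) - 4n ≥ (n - 1)² > 0`
  have hs : -1 < s := by
    refine lt_of_lt_of_le ?_ hs1
    rw [lt_div_iff₀ (by nlinarith)]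
    nlinarith [sq_nonneg ((n : ℝ) - 1)]
  have hbound := sum_sum_norm_sub_ge hs hs2 hz hsep
  rw [Fintype.card_fin, finrank_euclideanSpace_fin] at hbound
  convert hbound using 1
  have hden : 1 - s ^ 2 ≠ 0 := (by nlinarith : 0 < 1 - s ^ 2).ne'
  rw [mul_one_sub 2 s]
  field_simp
  ring
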